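/- The four points V₉=(6,1,0), V₁₀=(8,0,−1), V₁₂=(12,−2,−3) and V₁₅=(10,−1,−2) of ℝ³ are collinear (they lie on a common line), and moreover V₁₅ lies in the open segment between V₇=(10,−1,−8) and V₈=(10,−1,1). Hence the line L₃ through V₉ and V₁₅ meets the primary knot K₀ in at least the four points V₉, V₁₀, V₁₂, V₁₅. -/
import Mathlib


noncomputable section

/-- A line in ℝ³: a 1-dimensional affine subspace, in parametric form. -/
def IsLine (L : Set (Fin 3 → ℝ)) : Prop :=
  ∃ p v : Fin 3 → ℝ, v ≠ 0 ∧ L = {x | ∃ t : ℝ, x = p + t • v}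

def V₁ : Fin 3 → ℝ := ![0, 0, 0]
def V₂ : Fin 3 → ℝ := ![0, 0, -4]
def V₃ : Fin 3 → ℝ := ![8, -2, -4]
def V₄ : Fin 3 → ℝ := ![6, -3, -6]
def V₅ : Fin 3 → ℝ := ![0, 0, -6]
def V₆ : Fin 3 → ℝ := ![0, 0, -8]
def V₇ : Fin 3 → ℝ := ![10, -1, -8]
def V₈ : Fin 3 → ℝ := ![10, -1, 1]
def V₉ : Fin 3 → ℝ := ![6, 1, 0]
def V₁₀ : Fin 3 → ℝ := ![8, 0, -1]
def V₁₁ : Fin 3 → ℝ := ![6, -1, 0]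
def V₁₂ : Fin 3 → ℝ := ![12, -2, -3]
def V₁₃ : Fin 3 → ℝ := ![12, 0, 0]
def V₁₄ : Fin 3 → ℝ := ![6, 2, 0]

/-- The point V₁₅ = (10,−1,−2) on the edge V₇V₈. -/
def V₁₅ : Fin 3 → ℝ := ![10, -1, -2]

/-- The primary knot K₀: the closed polygon with successive vertices V₁,…,V₁₄. -/
def K₀ : Set (Fin 3 → ℝ) :=
  segment ℝ V₁ V₂ ∪ segment ℝ V₂ V₃ ∪ segment ℝ V₃ V₄ ∪ segment ℝ V₄ V₅ ∪
  segment ℝ V₅ V₆ ∪ segment ℝ V₆ V₇ ∪ segment ℝ V₇ V₈ ∪ segment ℝ V₈ V₉ ∪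
  segment ℝ V₉ V₁₀ ∪ segment ℝ V₁₀ V₁₁ ∪ segment ℝ V₁₁ V₁₂ ∪ segment ℝ V₁₂ V₁₃ ∪
  segment ℝ V₁₃ V₁₄ ∪ segment ℝ V₁₄ V₁

/-- V₉, V₁₀, V₁₂, V₁₅ are collinear, V₁₅ lies in the open segment between V₇ and V₈,
and hence the line L₃ through V₉ and V₁₅ meets K₀ in at least the four points
V₉, V₁₀, V₁₂, V₁₅. -/
theorem quadrisecant_L₃_of_K₀ :
    Collinear ℝ ({V₉, V₁₀, V₁₂, V₁₅} : Set (Fin 3 → ℝ)) ∧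
    V₁₅ ∈ openSegment ℝ V₇ V₈ ∧
    V₉ ≠ V₁₀ ∧ V₉ ≠ V₁₂ ∧ V₉ ≠ V₁₅ ∧ V₁₀ ≠ V₁₂ ∧ V₁₀ ≠ V₁₅ ∧ V₁₂ ≠ V₁₅ ∧
    ({V₉, V₁₀, V₁₂, V₁₅} : Set (Fin 3 → ℝ)) ⊆
      (affineSpan ℝ ({V₉, V₁₅} : Set (Fin 3 → ℝ)) : Set (Fin 3 → ℝ)) ∩ K₀ := by
  have h10 : V₁₀ = V₉ + (1/2 : ℝ) • (V₁₅ - V₉) := by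
    funext i; fin_cases i <;> simp [V₉, V₁₀, V₁₅] <;> norm_num
  have h12 : V₁₂ = V₉ + (3/2 : ℝ) • (V₁₅ - V₉) := by
    funext i; fin_cases i <;> simp [V₉, V₁₂, V₁₅] <;> norm_num
  refine ⟨?_, ?_, ?_, ?_, ?_, ?_, ?_, ?_, ?_⟩
  · rw [collinear_iff_of_mem (Set.mem_insert V₉ _)]
    refine ⟨V₁₅ - V₉, fun p hp => ?_⟩
    simp only [Set.mem_insert_iff, Set.mem_singleton_iff] at hp
    rcases hp with rfl | rfl | rfl | rfl
    · exact ⟨0, by simp⟩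
    · exact ⟨1/2, by rw [h10]; simp [vadd_eq_add, add_comm]⟩
    · exact ⟨3/2, by rw [h12]; simp [vadd_eq_add, add_comm]⟩
    · exact ⟨1, by simp [vadd_eq_add, add_comm]⟩
  · refine ⟨1/3, 2/3, by norm_num, by norm_num, by norm_num, ?_⟩
    funext i; fin_cases i <;> simp [V₇, V₈, V₁₅] <;> norm_num
  · intro h; have := congrFun h 0; norm_num [V₉, V₁₀] at this
  · intro h; have := congrFun h 0; norm_num [V₉, V₁₂] at this
  · intro h; have := congrFun h 0; norm_num [V₉, V₁₅] at this
  · intro h; have := congrFun h 0; norm_num [V₁₀, V₁₂] at this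
  · intro h; have := congrFun h 0; norm_num [V₁₀, V₁₅] at this
  · intro h; have := congrFun h 0; norm_num [V₁₂, V₁₅] at this
  · have h9s : V₉ ∈ (affineSpan ℝ ({V₉, V₁₅} : Set (Fin 3 → ℝ)) : Set (Fin 3 → ℝ)) :=
      subset_affineSpan ℝ _ (Set.mem_insert _ _)
    have h15s : V₁₅ ∈ (affineSpan ℝ ({V₉, V₁₅} : Set (Fin 3 → ℝ)) : Set (Fin 3 → ℝ)) :=
      subset_affineSpan ℝ _ (Set.mem_insert_of_mem _ rfl)
    have h10s : V₁₀ ∈ (affineSpan ℝ ({V₉, V₁₅} : Set (Fin 3 → ℝ)) : Set (Fin 3 → ℝ)) := by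
      have := AffineMap.lineMap_mem_affineSpan_pair (1/2 : ℝ) V₉ V₁₅
      rwa [show AffineMap.lineMap V₉ V₁₅ (1/2 : ℝ) = V₁₀ from by
        rw [h10]; simp [AffineMap.lineMap_apply, vadd_eq_add, add_comm]] at this
    have h12s : V₁₂ ∈ (affineSpan ℝ ({V₉, V₁₅} : Set (Fin 3 → ℝ)) : Set (Fin 3 → ℝ)) := by
      have := AffineMap.lineMap_mem_affineSpan_pair (3/2 : ℝ) V₉ V₁₅
      rwa [show AffineMap.lineMap V₉ V₁₅ (3/2 : ℝ) = V₁₂ from by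
        rw [h12]; simp [AffineMap.lineMap_apply, vadd_eq_add, add_comm]] at this
    intro p hp
    simp only [Set.mem_insert_iff, Set.mem_singleton_iff] at hp
    have h15k : V₁₅ ∈ segment ℝ V₇ V₈ :=
      ⟨1/3, 2/3, by norm_num, by norm_num, by norm_num,
        by funext i; fin_cases i <;> simp [V₇, V₈, V₁₅] <;> norm_num⟩
    rcases hp with rfl | rfl | rfl | rfl
    · exact ⟨h9s, by simp only [K₀, Set.mem_union]; have := right_mem_segment ℝ V₈ V₉; tauto⟩
    · exact ⟨h10s, by simp only [K₀, Set.mem_union]; have := right_mem_segment ℝ V₉ V₁₀; tauto⟩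
    · exact ⟨h12s, by simp only [K₀, Set.mem_union]; have := right_mem_segment ℝ V₁₁ V₁₂; tauto⟩
    · exact ⟨h15s, by simp only [K₀, Set.mem_union]; tauto⟩
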